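/- ∑_{k=1}^∞ (1/12)^k / C(3k,k) = 1/80 + (183√15/3200)·arctan((√15 − √12)/3) − (9/256)·log(3/2). -/

import Mathlib

/-!
Euler's Beta integral gives `1 / C(3n, n) = (3n + 1) ∫₀¹ tⁿ (1 - t)²ⁿ dt`, so with
`w(t) = t (1 - t)² / 12 ∈ [0, 1/12]` the series is `∫₀¹ ∑_{n ≥ 1} (3n + 1) w(t)ⁿ dt`
`= ∫₀¹ (3w / (1 - w)² + w / (1 - w)) dt` (dominated convergence). As
`1 - w(t) = (3 - t)(t² + t + 4) / 12`, this is the integral of a rational function, computed by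
partial fractions. The arctangent it produces is `arctan (√15 / 9)`, which the triple angle
formula turns into `3 arctan ((√15 - √12) / 3)`.
-/

open Real intervalIntegral
open scoped Nat

theorem integral_pow_mul_one_sub_pow_succ (a b : ℕ) :
    (a + 1) * ∫ t in (0:ℝ)..1, t ^ a * (1 - t) ^ (b + 1) =
      (b + 1) * ∫ t in (0:ℝ)..1, t ^ (a + 1) * (1 - t) ^ b := by
  have hderiv : ∀ x ∈ Set.uIcc (0:ℝ) 1, HasDerivAt (fun t : ℝ => t ^ (a + 1) * (1 - t) ^ (b + 1))
      ((a + 1) * (x ^ a * (1 - x) ^ (b + 1)) - (b + 1) * (x ^ (a + 1) * (1 - x) ^ b)) x := by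
    intro x _
    refine ((hasDerivAt_pow (a + 1) x).fun_mul
      (((hasDerivAt_id' x).const_sub 1).fun_pow (b + 1))).congr_deriv ?_
    simp only [Nat.add_sub_cancel]
    push_cast
    ring
  have h := integral_eq_sub_of_hasDerivAt hderiv (Continuous.intervalIntegrable (by fun_prop) _ _)
  rw [integral_sub (Continuous.intervalIntegrable (by fun_prop) _ _)
    (Continuous.intervalIntegrable (by fun_prop) _ _), integral_const_mul, integral_const_mul] at h
  norm_num at h
  linarith

theorem integral_pow_mul_one_sub_pow (a b : ℕ) :
    ∫ t in (0:ℝ)..1, t ^ a * (1 - t) ^ b = a ! * b ! / (a + b + 1)! := by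
  induction b generalizing a with
  | zero => simp [Nat.factorial_succ]; field_simp
  | succ b ih =>
    have h := integral_pow_mul_one_sub_pow_succ a b
    rw [ih, show a + 1 + b + 1 = a + (b + 1) + 1 by omega] at h
    rw [eq_div_iff (by positivity)]
    apply mul_left_cancel₀ (by positivity : (a + 1 : ℝ) ≠ 0)
    rw [← mul_assoc, h, Nat.factorial_succ a, Nat.factorial_succ b]
    push_cast
    field_simp

theorem inv_choose_eq_integral (a b : ℕ) :
    (((a + b).choose a : ℕ) : ℝ)⁻¹ = (a + b + 1) * ∫ t in (0:ℝ)..1, t ^ a * (1 - t) ^ b := by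
  rw [Nat.cast_add_choose, integral_pow_mul_one_sub_pow, Nat.factorial_succ]
  push_cast
  field_simp

noncomputable def weight (t : ℝ) : ℝ := t * (1 - t) ^ 2 / 12

theorem div_choose_three_mul_eq_integral (n : ℕ) :
    (1 / 12 : ℝ) ^ n / ((3 * n).choose n : ℕ) = ∫ t in (0:ℝ)..1, (3 * n + 1) * weight t ^ n := by
  have h := inv_choose_eq_integral n (2 * n)
  rw [show n + 2 * n = 3 * n by ring] at h
  push_cast at h
  simp_rw [div_eq_mul_inv _ ((_ : ℕ) : ℝ), h, weight, div_pow, mul_pow, ← pow_mul]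
  rw [← integral_const_mul, ← integral_const_mul]
  congr 1
  ext t
  ring

@[fun_prop]
theorem continuous_weight : Continuous weight := by
  unfold weight; fun_prop

theorem abs_weight_le {t : ℝ} (h0 : 0 ≤ t) (h1 : t ≤ 1) : |weight t| ≤ 1 / 12 := by
  have hsq : (1 - t) ^ 2 ≤ 1 := by nlinarith
  rw [abs_of_nonneg (by unfold weight; positivity)]
  unfold weight
  nlinarith [sq_nonneg (1 - t)]

theorem sq_add_self_add_four_pos (t : ℝ) : 0 < t ^ 2 + t + 4 := by
  nlinarith [sq_nonneg (2 * t + 1)]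

theorem one_sub_weight (t : ℝ) : 1 - weight t = (3 - t) * (t ^ 2 + t + 4) / 12 := by
  unfold weight; ring

theorem hasSum_three_mul_add_one_mul_pow_succ {𝕜 : Type*} [NormedField 𝕜] [CompleteSpace 𝕜]
    {r : 𝕜} (hr : ‖r‖ < 1) :
    HasSum (fun n : ℕ => (3 * ((n + 1 : ℕ) : 𝕜) + 1) * r ^ (n + 1))
      (3 * r / (1 - r) ^ 2 + r / (1 - r)) := by
  have hr1 : 1 - r ≠ 0 := sub_ne_zero.2 (fun h => by simp [← h] at hr)
  have h := ((hasSum_coe_mul_geometric_of_norm_lt_one hr).mul_left 3).add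
    (hasSum_geometric_of_norm_lt_one hr)
  rw [← hasSum_nat_add_iff' 1] at h
  have hsum : 3 * r / (1 - r) ^ 2 + r / (1 - r) =
      3 * (r / (1 - r) ^ 2) + (1 - r)⁻¹ - ∑ i ∈ Finset.range 1, (3 * (i * r ^ i) + r ^ i) := by
    simp only [Finset.range_one, Finset.sum_singleton, pow_zero]
    field_simp
    ring
  rw [hsum]
  exact h.congr_fun fun n => by push_cast; ring

theorem hasSum_intervalIntegral_three_mul_add_one_mul_pow_succ {u : ℝ → ℝ} (hu : Continuous u)
    {a b ρ : ℝ} (hρ₀ : 0 ≤ ρ) (hρ₁ : ρ < 1) (hbound : ∀ t ∈ Set.uIoc a b, |u t| ≤ ρ) :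
    HasSum (fun n : ℕ => ∫ t in a..b, (3 * ((n + 1 : ℕ) : ℝ) + 1) * u t ^ (n + 1))
      (∫ t in a..b, (3 * u t / (1 - u t) ^ 2 + u t / (1 - u t))) := by
  have hρ : ‖ρ‖ < 1 := by rwa [Real.norm_eq_abs, abs_of_nonneg hρ₀]
  refine hasSum_integral_of_dominated_convergence
    (fun n _ => (3 * ((n + 1 : ℕ) : ℝ) + 1) * ρ ^ (n + 1))
    (fun n => (by fun_prop : Continuous _).aestronglyMeasurable)
    (fun n => MeasureTheory.ae_of_all _ fun t ht => ?_)
    (MeasureTheory.ae_of_all _ fun _ _ => (hasSum_three_mul_add_one_mul_pow_succ hρ).summable)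
    intervalIntegrable_const
    (MeasureTheory.ae_of_all _ fun t ht =>
      hasSum_three_mul_add_one_mul_pow_succ ((hbound t ht).trans_lt hρ₁))
  rw [norm_mul, norm_pow, Real.norm_eq_abs, Real.norm_eq_abs, abs_of_nonneg (by positivity)]
  gcongr
  exact hbound t ht

theorem hasDerivAt_arctan_mul_sqrt_fifteen_div {t : ℝ} (ht : t + 8 ≠ 0) :
    HasDerivAt (fun t => arctan (t * √15 / (t + 8))) (√15 / (2 * (t ^ 2 + t + 4))) t := by
  refine (((hasDerivAt_id' t).mul_const √15).fun_div ((hasDerivAt_id' t).add_const 8) ht).arctan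
    |>.congr_deriv ?_
  have h15 : √15 ^ 2 = 15 := sq_sqrt (by norm_num)
  have hq : t * (t + 1) + 4 ≠ 0 := by nlinarith [sq_add_self_add_four_pos t]
  field_simp
  rw [h15]
  ring

/-- The arctangent term is `(2/√15) (arctan ((2t + 1)/√15) - arctan (1/√15))`, combined into a
single arctangent that vanishes at `t = 0` and has no branch jump on `t > -8`. -/
noncomputable def seriesPrimitive (t : ℝ) : ℝ :=
  3 / 128 * log (3 - t) + 27 / 16 * (3 - t)⁻¹ - 3 / 256 * log (t ^ 2 + t + 4)
    + (153 * t - 396) / (80 * (t ^ 2 + t + 4)) - t + 61 * √15 / 3200 * arctan (t * √15 / (t + 8))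

theorem hasDerivAt_seriesPrimitive {t : ℝ} (h3 : t ≠ 3) (h8 : t + 8 ≠ 0) :
    HasDerivAt seriesPrimitive
      (3 * weight t / (1 - weight t) ^ 2 + weight t / (1 - weight t)) t := by
  have h3t : 3 - t ≠ 0 := sub_ne_zero.2 h3.symm
  have hq : t ^ 2 + t + 4 ≠ 0 := (sq_add_self_add_four_pos t).ne'
  have hlin : HasDerivAt (fun t : ℝ => 3 - t) (-1) t := by
    simpa using (hasDerivAt_id' t).const_sub 3
  have hquad : HasDerivAt (fun t : ℝ => t ^ 2 + t + 4) (2 * t + 1) t := by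
    simpa using ((hasDerivAt_pow 2 t).add (hasDerivAt_id' t)).add_const 4
  have h := (((((hlin.log h3t).const_mul (3 / 128)).fun_add
    ((hlin.fun_inv h3t).const_mul (27 / 16))).fun_sub ((hquad.log hq).const_mul (3 / 256))).fun_add
    ((((hasDerivAt_id' t).const_mul 153).sub_const 396).fun_div (hquad.const_mul 80)
      (mul_ne_zero (by norm_num) hq))).fun_sub (hasDerivAt_id' t) |>.fun_add
    ((hasDerivAt_arctan_mul_sqrt_fifteen_div h8).const_mul (61 * √15 / 3200))
  refine h.congr_deriv ?_
  have h15 : √15 ^ 2 = 15 := sq_sqrt (by norm_num)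
  rw [one_sub_weight, weight]
  have hq' : t * (t + 1) + 4 ≠ 0 := by nlinarith [sq_add_self_add_four_pos t]
  field_simp
  rw [h15]
  ring

theorem three_mul_arctan {x : ℝ} (h : 3 * x ^ 2 < 1) :
    3 * arctan x = arctan ((3 * x - x ^ 3) / (1 - 3 * x ^ 2)) := by
  have hx1 : -1 < x := by nlinarith
  have hx2 : x < 1 := by nlinarith
  have hx : 1 - x ^ 2 ≠ 0 := by nlinarith
  have hmul : 2 * x / (1 - x ^ 2) * x < 1 := by
    rw [div_mul_eq_mul_div, div_lt_one (by nlinarith)]; nlinarith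
  rw [show 3 * arctan x = 2 * arctan x + arctan x by ring, two_mul_arctan hx1 hx2,
    arctan_add hmul]
  congr 1
  have : 1 - 3 * x ^ 2 ≠ 0 := by linarith
  field_simp
  ring

theorem arctan_sqrt_fifteen_div_nine : arctan (√15 / 9) = 3 * arctan ((√15 - √12) / 3) := by
  have ha : √3 ^ 2 = 3 := sq_sqrt (by norm_num)
  have hb : √5 ^ 2 = 5 := sq_sqrt (by norm_num)
  have hb2 : 2 < √5 := by nlinarith [sqrt_nonneg 5]
  have h15 : √15 = √3 * √5 := by rw [← sqrt_mul (by norm_num)]; norm_num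
  have h12 : √12 = 2 * √3 := by
    rw [show (12:ℝ) = 2 ^ 2 * 3 by norm_num, sqrt_mul (by norm_num), sqrt_sq (by norm_num)]
  set w := (√15 - √12) / 3 with hw
  have hw2 : w ^ 2 = (9 - 4 * √5) / 3 := by
    rw [hw, h15, h12]; linear_combination ((√5 - 2) ^ 2 / 9) * ha + (1 / 3) * hb
  have h3w : 3 * w ^ 2 < 1 := by rw [hw2]; linarith
  rw [three_mul_arctan h3w, show 3 * w - w ^ 3 = w * (3 - w ^ 2) by ring, hw2, hw, h15, h12,
    show 1 - 3 * ((9 - 4 * √5) / 3) = 4 * (√5 - 2) by ring]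
  congr 1
  have : √5 - 2 ≠ 0 := by linarith
  field_simp
  ring

theorem integral_weight_series :
    ∫ t in (0:ℝ)..1, (3 * weight t / (1 - weight t) ^ 2 + weight t / (1 - weight t)) =
      1 / 80 + (183 * √15 / 3200) * arctan ((√15 - √12) / 3) - (9 / 256) * log (3 / 2) := by
  have hne : ∀ t ∈ Set.uIcc (0:ℝ) 1, 1 - weight t ≠ 0 := by
    intro t ht
    rw [Set.uIcc_of_le zero_le_one] at ht
    have hq := sq_add_self_add_four_pos t
    have h3 : 0 < 3 - t := by linarith [ht.2]
    rw [one_sub_weight]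
    positivity
  have hderiv : ∀ t ∈ Set.uIcc (0:ℝ) 1, HasDerivAt seriesPrimitive
      (3 * weight t / (1 - weight t) ^ 2 + weight t / (1 - weight t)) t := by
    intro t ht
    rw [Set.uIcc_of_le zero_le_one] at ht
    exact hasDerivAt_seriesPrimitive (by linarith [ht.2]) (by linarith [ht.1])
  have hcont : ContinuousOn
      (fun t => 3 * weight t / (1 - weight t) ^ 2 + weight t / (1 - weight t)) (Set.uIcc 0 1) := by
    fun_prop (disch := first | exact fun t ht => pow_ne_zero 2 (hne t ht) | exact hne)
  rw [integral_eq_sub_of_hasDerivAt hderiv hcont.intervalIntegrable, seriesPrimitive,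
    seriesPrimitive]
  norm_num
  have hlog6 : log 6 = log 2 + log 3 := by
    rw [← log_mul (by norm_num) (by norm_num)]; norm_num
  have hlog4 : log 4 = 2 * log 2 := by
    rw [← log_rpow (by norm_num)]; norm_num
  rw [arctan_sqrt_fifteen_div_nine, hlog6, hlog4, log_div (by norm_num) (by norm_num)]
  ring

theorem stmt_19 :
    ∑' k : ℕ, (1/12 : ℝ)^(k+1) / ((((3*(k+1)).choose (k+1) : ℕ)) : ℝ) =
    1/80 + (183*Real.sqrt 15/3200)*Real.arctan ((Real.sqrt 15 - Real.sqrt 12)/3) - (9/256)*Real.log (3/2) := by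
  have hsum := hasSum_intervalIntegral_three_mul_add_one_mul_pow_succ continuous_weight
    (by norm_num : (0:ℝ) ≤ 1 / 12) (by norm_num) fun t ht => by
      rw [Set.uIoc_of_le zero_le_one] at ht
      exact abs_weight_le ht.1.le ht.2
  rw [← integral_weight_series]
  exact (hsum.congr_fun fun k => div_choose_three_mul_eq_integral (k + 1)).tsum_eq
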